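/- arXiv:2307.07248 — 5 statements merged into one kernel-verified Lean document; each statement's English description precedes it below -/
import Mathlib

section
/- Consider a sequence of random trials {X_t} with values in {ω1, ω2, ω3} and stopping time T = min{t : X_t ≠ ω3}. For each t let p_t = Pr[X_t = ω1 | C_t] and q_t = Pr[X_t = ω2 | C_t], where C_t is the event that all trials before t resulted in ω3. If there exist p > 0 and α > 0 such that p_t + q_t ≥ p and q_t/p_t < α for all t, then Pr[X_T = ω1] ≥ 1/(1 + α). -/
/-!
Let `A t` be the event that trial `t` is the first one different from ω3 and equals ω1, and
`B t` the same with ω2. The events `A t` are disjoint and contained in `{X_T = ω1}`, the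
hypothesis `q_t < α p_t` reads `μ (B t) ≤ α μ (A t)`, and since `T` is a.s. finite the events
`A t ∪ B t` cover almost everything. Hence
`1 ≤ ∑ (μ (A t) + μ (B t)) ≤ (1 + α) μ {X_T = ω1}`.
-/

open MeasureTheory ENNReal

/-- The event that all trials before time `t` (with indices `1 ≤ τ < t`) resulted in ω3
(encoded as `2 : Fin 3`). -/
def allEarlierOmega3 {Ω : Type*} (X : ℕ → Ω → Fin 3) (t : ℕ) : Set Ω :=
  {ω | ∀ τ, 1 ≤ τ → τ < t → X τ ω = 2}

/-- Shifted by one since trials start at `1`: for `i ≠ 2` this is the event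
`T = t + 1 ∧ X_T = i`. -/
def firstExit {Ω : Type*} (X : ℕ → Ω → Fin 3) (i : Fin 3) (t : ℕ) : Set Ω :=
  {ω | X (t + 1) ω = i} ∩ allEarlierOmega3 X (t + 1)

section FirstExit

variable {Ω : Type*} {X : ℕ → Ω → Fin 3}

theorem measurableSet_allEarlierOmega3 [MeasurableSpace Ω] (hX : ∀ t, Measurable (X t))
    (t : ℕ) : MeasurableSet (allEarlierOmega3 X t) := by
  have : allEarlierOmega3 X t = ⋂ τ, ⋂ (_ : 1 ≤ τ), ⋂ (_ : τ < t), X τ ⁻¹' {2} := by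
    ext ω
    simp [allEarlierOmega3]
  rw [this]
  exact .iInter fun τ => .iInter fun _ => .iInter fun _ => hX τ (measurableSet_singleton 2)

theorem measurableSet_firstExit [MeasurableSpace Ω] (hX : ∀ t, Measurable (X t))
    (i : Fin 3) (t : ℕ) : MeasurableSet (firstExit X i t) :=
  (hX (t + 1) (measurableSet_singleton i)).inter (measurableSet_allEarlierOmega3 hX (t + 1))

theorem mem_allEarlierOmega3_sInf (ω : Ω) :
    ω ∈ allEarlierOmega3 X (sInf {t | 1 ≤ t ∧ X t ω ≠ 2}) := by
  intro τ hτ hlt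
  by_contra hne
  exact (Nat.sInf_le (show τ ∈ {t | 1 ≤ t ∧ X t ω ≠ 2} from ⟨hτ, hne⟩)).not_gt hlt

theorem sInf_eq_of_mem_allEarlierOmega3 {ω : Ω} {t : ℕ} (ht : 1 ≤ t) (hXt : X t ω ≠ 2)
    (hω : ω ∈ allEarlierOmega3 X t) : sInf {s | 1 ≤ s ∧ X s ω ≠ 2} = t := by
  refine le_antisymm (Nat.sInf_le ⟨ht, hXt⟩) ?_
  exact le_csInf ⟨t, ht, hXt⟩ fun s hs => not_lt.1 fun hlt => hs.2 (hω s hs.1 hlt)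

theorem pairwise_disjoint_firstExit {i : Fin 3} (hi : i ≠ 2) :
    Pairwise (Function.onFun Disjoint (firstExit X i)) := by
  refine (pairwise_disjoint_on _).2 fun s t hst => Set.disjoint_left.2 fun ω hs ht => hi ?_
  rw [← hs.1]
  exact ht.2 (s + 1) (Nat.le_add_left 1 s) (Nat.succ_lt_succ hst)

theorem iUnion_firstExit_subset {i : Fin 3} (hi : i ≠ 2) :
    ⋃ t, firstExit X i t ⊆ {ω | X (sInf {s | 1 ≤ s ∧ X s ω ≠ 2}) ω = i} := by
  rintro ω ⟨_, ⟨t, rfl⟩, hXt, hω⟩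
  have hXt : X (t + 1) ω = i := hXt
  show X _ ω = i
  rw [sInf_eq_of_mem_allEarlierOmega3 (Nat.le_add_left 1 t) (hXt ▸ hi) hω, hXt]

theorem mem_iUnion_firstExit {ω : Ω} (hω : ∃ t, 1 ≤ t ∧ X t ω ≠ 2) :
    ω ∈ ⋃ t, firstExit X 0 t ∪ firstExit X 1 t := by
  have hC := mem_allEarlierOmega3_sInf (X := X) ω
  obtain ⟨hT, hXT⟩ : 1 ≤ sInf {t | 1 ≤ t ∧ X t ω ≠ 2} ∧
      X (sInf {t | 1 ≤ t ∧ X t ω ≠ 2}) ω ≠ 2 := Nat.sInf_mem hω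
  obtain ⟨t, ht⟩ := Nat.exists_eq_add_of_le' hT
  rw [ht] at hXT hC
  have hFin3 : ∀ x : Fin 3, x ≠ 2 → x = 0 ∨ x = 1 := by decide
  exact Set.mem_iUnion.2 ⟨t, (hFin3 _ hXT).imp (⟨·, hC⟩) (⟨·, hC⟩)⟩

end FirstExit

theorem measure_iUnion_union_le_of_le_mul {Ω : Type*} [MeasurableSpace Ω] {μ : Measure Ω}
    {A B : ℕ → Set Ω} {c : ℝ≥0∞} (hA : Pairwise (Function.onFun Disjoint A))
    (hAm : ∀ t, MeasurableSet (A t)) (hBA : ∀ t, μ (B t) ≤ c * μ (A t)) :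
    μ (⋃ t, A t ∪ B t) ≤ (1 + c) * μ (⋃ t, A t) :=
  calc μ (⋃ t, A t ∪ B t)
      ≤ ∑' t, (μ (A t) + μ (B t)) :=
        (measure_iUnion_le _).trans (ENNReal.tsum_le_tsum fun t => measure_union_le _ _)
    _ ≤ ∑' t, μ (A t) + ∑' t, c * μ (A t) := by
        rw [ENNReal.tsum_add]
        exact add_le_add_right (ENNReal.tsum_le_tsum hBA) _
    _ = (1 + c) * μ (⋃ t, A t) := by
        rw [ENNReal.tsum_mul_left, measure_iUnion hA hAm]
        ring

theorem ENNReal.ofReal_one_div_one_add_le {α : ℝ} (hα : 0 ≤ α) {x : ℝ≥0∞}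
    (hx : 1 ≤ (1 + ENNReal.ofReal α) * x) : ENNReal.ofReal (1 / (1 + α)) ≤ x := by
  rw [ENNReal.ofReal_div_of_pos (by linarith), ENNReal.ofReal_add zero_le_one hα,
    ENNReal.ofReal_one, ENNReal.div_le_iff (by simp) (by simp), mul_comm]
  exact hx

theorem stmt6_general {Ω : Type*} [MeasurableSpace Ω] (μ : Measure Ω) [IsProbabilityMeasure μ]
    (X : ℕ → Ω → Fin 3) (hX : ∀ t, Measurable (X t))
    (T : Ω → ℕ) (hT : ∀ ω, T ω = sInf {t | 1 ≤ t ∧ X t ω ≠ 2})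
    (hTfin : ∀ᵐ ω ∂μ, ∃ t, 1 ≤ t ∧ X t ω ≠ 2)
    (p α : ℝ) (hα : 0 < α)
    (h : ∀ t, 1 ≤ t → μ (allEarlierOmega3 X t) ≠ 0 →
      ENNReal.ofReal p * μ (allEarlierOmega3 X t) ≤
          μ ({ω | X t ω = 0} ∩ allEarlierOmega3 X t) +
            μ ({ω | X t ω = 1} ∩ allEarlierOmega3 X t) ∧
        μ ({ω | X t ω = 1} ∩ allEarlierOmega3 X t) <
          ENNReal.ofReal α * μ ({ω | X t ω = 0} ∩ allEarlierOmega3 X t)) :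
    ENNReal.ofReal (1 / (1 + α)) ≤ μ {ω | X (T ω) ω = 0} := by
  obtain rfl : T = fun ω => sInf {t | 1 ≤ t ∧ X t ω ≠ 2} := funext hT
  have hBA : ∀ t, μ (firstExit X 1 t) ≤ ENNReal.ofReal α * μ (firstExit X 0 t) := by
    intro t
    by_cases hC : μ (allEarlierOmega3 X (t + 1)) = 0
    · simp [measure_mono_null Set.inter_subset_right hC, firstExit]
    · exact (h (t + 1) (Nat.le_add_left 1 t) hC).2.le
  have hcover : 1 ≤ μ (⋃ t, firstExit X 0 t ∪ firstExit X 1 t) :=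
    measure_univ.symm.le.trans
      (measure_mono_ae (hTfin.mono fun _ hω _ => mem_iUnion_firstExit hω))
  calc ENNReal.ofReal (1 / (1 + α)) ≤ μ (⋃ t, firstExit X 0 t) :=
        ENNReal.ofReal_one_div_one_add_le hα.le <| hcover.trans <|
          measure_iUnion_union_le_of_le_mul (pairwise_disjoint_firstExit (by decide))
            (measurableSet_firstExit hX 0) hBA
    _ ≤ _ := measure_mono (iUnion_firstExit_subset (by decide))

theorem stmt6 {Ω : Type*} [MeasurableSpace Ω] (μ : Measure Ω) [IsProbabilityMeasure μ]
    (X : ℕ → Ω → Fin 3) (hX : ∀ t, Measurable (X t))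
    (T : Ω → ℕ) (hT : ∀ ω, T ω = sInf {t | 1 ≤ t ∧ X t ω ≠ 2})
    (hTfin : ∀ᵐ ω ∂μ, ∃ t, 1 ≤ t ∧ X t ω ≠ 2)
    (p α : ℝ) (hp : 0 < p) (hα : 0 < α)
    (h : ∀ t, 1 ≤ t → μ (allEarlierOmega3 X t) ≠ 0 →
      ENNReal.ofReal p * μ (allEarlierOmega3 X t) ≤
          μ ({ω | X t ω = 0} ∩ allEarlierOmega3 X t) +
            μ ({ω | X t ω = 1} ∩ allEarlierOmega3 X t) ∧
        μ ({ω | X t ω = 1} ∩ allEarlierOmega3 X t) <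
          ENNReal.ofReal α * μ ({ω | X t ω = 0} ∩ allEarlierOmega3 X t)) :
    ENNReal.ofReal (1 / (1 + α)) ≤ μ {ω | X (T ω) ω = 0} :=
  stmt6_general μ X hX T hT hTfin p α hα h
end

section
/- Let n be odd. There exists a population of n+1 bit strings of length n, one with exactly i one-bits for each i ∈ [0..n], such that every position contains exactly (n+1)/2 one-bits, and consequently the population achieves the maximal total Hamming distance n * ((n+1)/2)^2. -/
/-- Hamming distance between two bit strings. -/
def hamming {n : ℕ} (x y : Fin n → Bool) : ℕ :=
  (Finset.univ.filter (fun k => x k ≠ y k)).card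

/-- Total Hamming distance of a population: sum over all pairs i < j. -/
def totalHamming {m n : ℕ} (P : Fin m → Fin n → Bool) : ℕ :=
  ∑ p ∈ Finset.univ.filter (fun p : Fin m × Fin m => p.1 < p.2), hamming (P p.1) (P p.2)

/-- Number of one-bits of a bit string. -/
def onesCount {n : ℕ} (x : Fin n → Bool) : ℕ :=
  (Finset.univ.filter (fun k => x k = true)).card

/-- Number of individuals with a one-bit at position k. -/
def colCount {m n : ℕ} (P : Fin m → Fin n → Bool) (k : Fin n) : ℕ :=
  (Finset.univ.filter (fun i => P i k = true)).card

lemma hamming_comm {n : ℕ} (x y : Fin n → Bool) : hamming x y = hamming y x := by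
  unfold hamming; congr 1; ext k; simp [ne_comm]

lemma colCount_false {m n : ℕ} (P : Fin m → Fin n → Bool) (k : Fin n) :
    (Finset.univ.filter (fun i => P i k = false)).card = m - colCount P k := by
  have h := Finset.card_filter_add_card_filter_not
    (s := (Finset.univ : Finset (Fin m))) (p := fun i => P i k = true)
  simp only [Finset.card_univ, Fintype.card_fin] at h
  have : (Finset.univ.filter (fun i => ¬ P i k = true)) =
      (Finset.univ.filter (fun i => P i k = false)) := by
    ext i; simp
  rw [this] at h
  simp only [colCount]
  omega

lemma sum_pairs_symm {m : ℕ} (f : Fin m → Fin m → ℕ)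
    (hsymm : ∀ i j, f i j = f j i) (hdiag : ∀ i, f i i = 0) :
    ∑ i, ∑ j, f i j =
      2 * ∑ p ∈ Finset.univ.filter (fun p : Fin m × Fin m => p.1 < p.2), f p.1 p.2 := by
  have hswap : ∑ p ∈ Finset.univ.filter (fun p : Fin m × Fin m => p.2 < p.1), f p.1 p.2
      = ∑ p ∈ Finset.univ.filter (fun p : Fin m × Fin m => p.1 < p.2), f p.1 p.2 := by
    apply Finset.sum_nbij' (fun p => Prod.swap p) (fun p => Prod.swap p) <;>
      simp +contextual [hsymm]
  have hall : ∑ i, ∑ j, f i j = ∑ p : Fin m × Fin m, f p.1 p.2 := by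
    rw [← Finset.sum_product']
    rfl
  rw [hall,
    ← Finset.sum_filter_add_sum_filter_not Finset.univ (fun p : Fin m × Fin m => p.1 < p.2)]
  have hnl : ∑ p ∈ Finset.univ.filter (fun p : Fin m × Fin m => ¬ p.1 < p.2), f p.1 p.2
      = ∑ p ∈ Finset.univ.filter (fun p : Fin m × Fin m => p.2 < p.1), f p.1 p.2 := by
    symm
    apply Finset.sum_subset
    · intro p hp
      simp only [Finset.mem_filter, Finset.mem_univ, true_and] at hp ⊢
      omega
    · intro p hp hnp
      simp only [Finset.mem_filter, Finset.mem_univ, true_and] at hp hnp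
      have : p.1 = p.2 := le_antisymm (le_of_not_gt hnp) (le_of_not_gt hp)
      rw [show f p.1 p.2 = f p.1 p.1 by rw [this], hdiag]
  rw [hnl, hswap]
  ring


lemma totalHamming_eq_cols {m n : ℕ} (P : Fin m → Fin n → Bool) :
    totalHamming P = ∑ k, colCount P k * (m - colCount P k) := by
  have key : 2 * totalHamming P = ∑ i, ∑ j, hamming (P i) (P j) := by
    rw [sum_pairs_symm (fun i j => hamming (P i) (P j))
      (fun i j => hamming_comm _ _) (fun i => by simp [hamming])]
    rfl
  have expand : ∑ i, ∑ j, hamming (P i) (P j)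
      = ∑ k, ∑ i, ∑ j, (if P i k ≠ P j k then 1 else 0) := by
    simp only [hamming, Finset.card_filter]
    calc ∑ i, ∑ j, ∑ k, (if P i k ≠ P j k then 1 else 0)
        = ∑ i, ∑ k, ∑ j, (if P i k ≠ P j k then 1 else 0) :=
          Finset.sum_congr rfl (fun i _ => Finset.sum_comm)
      _ = ∑ k, ∑ i, ∑ j, (if P i k ≠ P j k then 1 else 0) := Finset.sum_comm
  have col : ∀ k, (∑ i, ∑ j, (if P i k ≠ P j k then 1 else 0))
      = 2 * (colCount P k * (m - colCount P k)) := by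
    intro k
    have inner : ∀ i : Fin m, (∑ j, (if P i k ≠ P j k then 1 else 0))
        = if P i k = true then m - colCount P k else colCount P k := by
      intro i
      rw [← Finset.card_filter]
      cases h : P i k with
      | true =>
        simp only [h, if_pos rfl]
        rw [← colCount_false P k]
        congr 1; ext j; cases hj : P j k <;> simp [hj]
      | false =>
        simp only [h, Bool.false_eq_true, if_false]
        unfold colCount
        congr 1; ext j; cases hj : P j k <;> simp [hj]
    simp only [inner]
    rw [Finset.sum_ite, Finset.sum_const, Finset.sum_const, smul_eq_mul, smul_eq_mul]
    have h1 : (Finset.univ.filter (fun i => P i k = true)).card = colCount P k := rfl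
    have h2 : (Finset.univ.filter (fun i => ¬ P i k = true)).card = m - colCount P k := by
      rw [← colCount_false P k]; congr 1; ext i; simp
    rw [h1, h2]
    ring
  have : 2 * totalHamming P = 2 * ∑ k, colCount P k * (m - colCount P k) := by
    rw [key, expand, Finset.mul_sum]
    exact Finset.sum_congr rfl (fun k _ => col k)
  omega

theorem stmt8 (n : ℕ) (hn : Odd n) :
    ∃ x : Fin (n + 1) → Fin n → Bool,
      (∀ i : Fin (n + 1), onesCount (x i) = i) ∧
      (∀ k : Fin n, colCount x k = (n + 1) / 2) ∧
      totalHamming x = n * ((n + 1) / 2) ^ 2 := by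
  obtain ⟨t, ht⟩ := hn
  have hn1 : 1 ≤ n := by omega
  set P : Fin (n+1) → Fin n → Bool := fun i k =>
    if i.val ≤ n / 2 then decide (k.val < i.val)
    else decide (n - i.val ≤ k.val) with hP
  have hcol : ∀ k : Fin n, colCount P k = (n + 1) / 2 := by
    intro k
    unfold colCount
    simp only [hP]
    have hk := k.isLt
    by_cases hk2 : k.val ≤ n / 2
    · have h1 : k.val < n + 1 := by omega
      have h2 : n / 2 < n + 1 := by omega
      have h3 : n - k.val < n + 1 := by omega
      have : (Finset.univ.filter (fun i : Fin (n+1) =>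
          (if i.val ≤ n / 2 then decide (k.val < i.val)
            else decide (n - i.val ≤ k.val)) = true))
          = Finset.Ioc (⟨k.val, h1⟩ : Fin (n+1)) ⟨n / 2, h2⟩ ∪
            Finset.Ici (⟨n - k.val, h3⟩ : Fin (n+1)) := by
        ext i
        simp only [Finset.mem_filter, Finset.mem_univ, true_and, Finset.mem_union,
          Finset.mem_Ioc, Finset.mem_Ici, Fin.lt_def, Fin.le_def]
        split <;> simp only [decide_eq_true_eq] <;> omega
      rw [this, Finset.card_union_of_disjoint, Fin.card_Ioc, Fin.card_Ici]
      · simp only [Fin.val_mk]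
        omega
      · rw [Finset.disjoint_left]
        intro a ha hb
        simp only [Finset.mem_Ioc, Finset.mem_Ici, Fin.lt_def, Fin.le_def] at ha hb
        omega
    · have h2 : n / 2 + 1 < n + 1 := by omega
      have : (Finset.univ.filter (fun i : Fin (n+1) =>
          (if i.val ≤ n / 2 then decide (k.val < i.val)
            else decide (n - i.val ≤ k.val)) = true))
          = Finset.Ici (⟨n / 2 + 1, h2⟩ : Fin (n+1)) := by
        ext i
        simp only [Finset.mem_filter, Finset.mem_univ, true_and, Finset.mem_Ici,
          Fin.le_def, decide_eq_true_eq]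
        split <;> simp only [decide_eq_true_eq] <;> omega
      rw [this, Fin.card_Ici]
      simp only [Fin.val_mk]
      omega
  refine ⟨P, ?_, hcol, ?_⟩
  · intro i
    unfold onesCount
    simp only [hP]
    by_cases hi : i.val ≤ n / 2
    · have hlt : i.val < n := by omega
      have : (Finset.univ.filter (fun k : Fin n =>
          (if i.val ≤ n / 2 then decide (k.val < i.val)
            else decide (n - i.val ≤ k.val)) = true))
          = Finset.Iio (⟨i.val, hlt⟩ : Fin n) := by
        ext k
        simp only [Finset.mem_filter, Finset.mem_univ, true_and, Finset.mem_Iio,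
          Fin.lt_def, if_pos hi, decide_eq_true_eq]
      rw [this, Fin.card_Iio]
    · have hpos : n - i.val < n := by omega
      have : (Finset.univ.filter (fun k : Fin n =>
          (if i.val ≤ n / 2 then decide (k.val < i.val)
            else decide (n - i.val ≤ k.val)) = true))
          = Finset.Ici (⟨n - i.val, hpos⟩ : Fin n) := by
        ext k
        simp only [Finset.mem_filter, Finset.mem_univ, true_and, Finset.mem_Ici,
          Fin.le_def, if_neg hi, decide_eq_true_eq]
      rw [this, Fin.card_Ici]
      simp only [Fin.val_mk]
      have := i.isLt
      omega
  · rw [totalHamming_eq_cols]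
    have hterm : ∀ k : Fin n, colCount P k * ((n + 1) - colCount P k)
        = ((n + 1) / 2) ^ 2 := by
      intro k
      rw [hcol k, sq]
      congr 1
      omega
    rw [Finset.sum_congr rfl (fun k _ => hterm k), Finset.sum_const,
      Finset.card_univ, Fintype.card_fin, smul_eq_mul]
end

section
/- Let n ≥ 5 be odd and let P = (x_0,...,x_n) be an almost balanced population (x_i has i ones; one hot position with (n+3)/2 ones, one cold position with (n-1)/2 ones, all other positions with (n+1)/2 ones). Call a balanced position k a cold-candidate if at least n/16 of the individuals with a zero-bit in the cold position have a one-bit at position k. Then there are at least n/8 cold-candidate positions. -/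
open Finset

theorem Finset.card_mul_card_sub_one_le_two_mul_sum (s : Finset ℕ) :
    #s * (#s - 1) ≤ 2 * ∑ i ∈ s, i := by
  induction s using Finset.induction_on_max with
  | empty => simp
  | insert a t hlt ih =>
    have ha : a ∉ t := fun h => (hlt a h).false
    have hcard : #t ≤ a := by
      simpa using card_le_card fun i hi => mem_range.2 (hlt i hi)
    rw [card_insert_of_notMem ha, sum_insert ha, Nat.add_sub_cancel]
    generalize #t = c at *
    cases c with
    | zero => simp
    | succ j => simp only [Nat.add_sub_cancel] at ih; nlinarith

theorem Finset.sum_le_card_filter_mul_add_card_mul {ι : Type*} (s : Finset ι) (p : ι → Prop)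
    [DecidablePred p] (f : ι → ℕ) {a b : ℕ} (ha : ∀ k ∈ s, f k ≤ a)
    (hb : ∀ k ∈ s, ¬ p k → f k ≤ b) :
    ∑ k ∈ s, f k ≤ #{k ∈ s | p k} * a + #s * b := by
  rw [← sum_filter_add_sum_filter_not s p]
  gcongr
  · simpa using sum_le_card_nsmul _ _ _ fun k hk => ha k (mem_filter.1 hk).1
  · calc ∑ k ∈ s with ¬ p k, f k ≤ #{k ∈ s | ¬ p k} * b := by
          simpa using sum_le_card_nsmul _ _ _ fun k hk =>
            hb k (mem_filter.1 hk).1 (mem_filter.1 hk).2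
      _ ≤ #s * b := by gcongr; exact filter_subset _ _

theorem card_filter_eq_false_add_colCount {m n : ℕ} (P : Fin m → Fin n → Bool) (k : Fin n) :
    #{i | P i k = false} + colCount P k = m := by
  rw [colCount, add_comm]
  simpa using card_filter_add_card_filter_not (s := univ) (fun i => P i k = true)

theorem sum_onesCount_eq_sum_card_filter {m n : ℕ} (P : Fin m → Fin n → Bool)
    (s : Finset (Fin m)) : ∑ i ∈ s, onesCount (P i) = ∑ k, #{i ∈ s | P i k = true} := by
  simp only [onesCount, card_filter]
  exact sum_comm

theorem card_mul_card_sub_one_le_two_mul_sum_card_filter {m n : ℕ} (x : Fin m → Fin n → Bool)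
    (hlevels : ∀ i : Fin m, onesCount (x i) = i) (s : Finset (Fin m)) :
    #s * (#s - 1) ≤ 2 * ∑ k, #{i ∈ s | x i k = true} := by
  rw [← sum_onesCount_eq_sum_card_filter, sum_congr rfl fun i _ => hlevels i]
  simpa using (s.map Fin.valEmbedding).card_mul_card_sub_one_le_two_mul_sum

theorem Finset.sum_univ_eq_add_add_sum_filter_ne_ne {ι M : Type*} [Fintype ι] [DecidableEq ι]
    [AddCommMonoid M] (f : ι → M) {a b : ι} (hab : a ≠ b) :
    ∑ k, f k = f a + f b + ∑ k ∈ {k | k ≠ a ∧ k ≠ b}, f k := by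
  have hcompl : univ \ ({k | k ≠ a ∧ k ≠ b} : Finset ι) = {a, b} := by
    ext k
    simp only [mem_sdiff, mem_univ, mem_filter, mem_insert, mem_singleton, true_and]
    tauto
  rw [← sum_sdiff (subset_univ _), hcompl, sum_pair hab]

theorem two_mul_add_one_le_eight_mul_card_filter {ι : Type*} [Fintype ι] [DecidableEq ι]
    {m : ℕ} (hm : 2 ≤ m) (hι : Fintype.card ι = 2 * m + 1) (f : ι → ℕ) {hot cold : ι}
    (hne : hot ≠ cold) (hsum : (m + 2) * (m + 1) ≤ 2 * ∑ k, f k) (hcold : f cold = 0)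
    (hhot : f hot ≤ m + 2) (hbal : ∀ k, k ≠ hot → k ≠ cold → f k ≤ m + 1) :
    2 * m + 1 ≤ 8 * #{k | k ≠ hot ∧ k ≠ cold ∧ 2 * m + 1 ≤ 16 * f k} := by
  rw [sum_univ_eq_add_add_sum_filter_ne_ne f hne, hcold] at hsum
  have hB : #{k | k ≠ hot ∧ k ≠ cold} + 2 = 2 * m + 1 := by
    have := sum_univ_eq_add_add_sum_filter_ne_ne (fun _ => 1) hne
    simp only [sum_const, smul_eq_mul, mul_one, card_univ, hι] at this
    omega
  set B : Finset ι := {k | k ≠ hot ∧ k ≠ cold}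
  have hC : #{k | k ≠ hot ∧ k ≠ cold ∧ 2 * m + 1 ≤ 16 * f k} =
      #{k ∈ B | 2 * m + 1 ≤ 16 * f k} := by
    simp only [B, filter_filter, and_assoc]
  have hfB : 16 * ∑ k ∈ B, f k ≤
      #{k ∈ B | 2 * m + 1 ≤ 16 * f k} * (16 * (m + 1)) + #B * (2 * m) := by
    rw [mul_sum]
    apply sum_le_card_filter_mul_add_card_mul
    · intro k hk
      simp only [B, mem_filter, mem_univ, true_and] at hk
      have := hbal k hk.1 hk.2
      omega
    · intro k _ hk
      omega
  rw [hC]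
  by_contra! h
  have : 4 * #{k ∈ B | 2 * m + 1 ≤ 16 * f k} * (m + 1) ≤ m * (m + 1) :=
    Nat.mul_le_mul_right _ (by omega)
  rcases (show m = 2 ∨ 3 ≤ m by omega) with rfl | hm
  -- for `m = 2` the real relaxation is feasible; integrality of the counts is needed
  · omega
  · nlinarith

theorem stmt12_general (n : ℕ) (hn : Odd n) (hn5 : 5 ≤ n) (x : Fin (n + 1) → Fin n → Bool)
    (hlevels : ∀ i : Fin (n + 1), onesCount (x i) = i)
    (hot cold : Fin n) (hne : hot ≠ cold)
    (hcold : colCount x cold = (n - 1) / 2)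
    (hbal : ∀ k : Fin n, k ≠ hot → k ≠ cold → colCount x k = (n + 1) / 2) :
    (n : ℝ) / 8 ≤
      ((Finset.univ.filter (fun k : Fin n => k ≠ hot ∧ k ≠ cold ∧
        (n : ℝ) / 16 ≤
          ((Finset.univ.filter
            (fun i : Fin (n + 1) => x i cold = false ∧ x i k = true)).card : ℝ))).card : ℝ) := by
  obtain ⟨m, rfl⟩ := hn
  set Z : Finset (Fin (2 * m + 1 + 1)) := {i | x i cold = false}
  have hZ : #Z = m + 2 := by
    have : #Z + colCount x cold = 2 * m + 1 + 1 := card_filter_eq_false_add_colCount x cold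
    omega
  have key := two_mul_add_one_le_eight_mul_card_filter (by omega) (Fintype.card_fin _)
    (fun k => #{i ∈ Z | x i k = true}) hne
    (by simpa [hZ] using card_mul_card_sub_one_le_two_mul_sum_card_filter x hlevels Z)
    (by simp [Z, filter_filter]) (hZ ▸ card_filter_le _ _)
    fun k hk hk' => ((card_le_card (filter_subset_filter _ (subset_univ Z))).trans_eq
      (hbal k hk hk')).trans_eq (by omega)
  have hthreshold (c : ℕ) : ((2 * m + 1 : ℕ) : ℝ) / 16 ≤ c ↔ 2 * m + 1 ≤ 16 * c := by
    rw [div_le_iff₀' (by norm_num)]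
    exact_mod_cast Iff.rfl
  simp only [Z, filter_filter] at key
  simp only [hthreshold, div_le_iff₀' (by norm_num : (0 : ℝ) < 8)]
  exact_mod_cast key

theorem stmt12 (n : ℕ) (hn : Odd n) (hn5 : 5 ≤ n) (x : Fin (n + 1) → Fin n → Bool)
    (hlevels : ∀ i : Fin (n + 1), onesCount (x i) = i)
    (hot cold : Fin n) (hne : hot ≠ cold)
    (hhot : colCount x hot = (n + 3) / 2) (hcold : colCount x cold = (n - 1) / 2)
    (hbal : ∀ k : Fin n, k ≠ hot → k ≠ cold → colCount x k = (n + 1) / 2) :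
    (n : ℝ) / 8 ≤
      ((Finset.univ.filter (fun k : Fin n => k ≠ hot ∧ k ≠ cold ∧
        (n : ℝ) / 16 ≤
          ((Finset.univ.filter
            (fun i : Fin (n + 1) => x i cold = false ∧ x i k = true)).card : ℝ))).card : ℝ) :=
  stmt12_general n hn hn5 x hlevels hot cold hne hcold hbal
end

section
/- In an almost balanced population P (n odd), with x_i having a zero-bit in the cold position and a one-bit in the hot position, let x̃_i differ from x_i exactly in the hot and cold positions, and let S_0, S_1 be the zero- and one-positions of x̃_i. A bit string y with |y| = i, y ≠ x̃_i, replaces x_i without decreasing the total Hamming distance if and only if y has exactly one one-bit in S_0 and exactly one zero-bit in S_1; any such replacement leaves the total Hamming distance unchanged. -/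
/-!
Replacing `x i` by `xt` moves a one-bit from the hot to the cold column, so in the resulting
population `Q` every column holds exactly half of the `n + 1` individuals. The total Hamming
distance is `∑ k, c k * (n + 1 - c k)` in terms of the column counts `c k`, and `c * (2c - c)`
drops by exactly one when `c` moves by one; hence replacing the `i`-th individual of `Q` by any
`z` costs exactly `hamming xt z`. Both `x` (with `z = x i`, at distance 2) and the new population
(with `z = y`) arise this way. Since `y` and `xt` have the same number of ones, `y` has as many
one-bits in `S0` as zero-bits in `S1`, say `a` of each, and `a ≥ 1` as `y ≠ xt`; so the
replacement costs `2a - 2`, which is nonnegative only for `a = 1`, and then zero.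
-/

open Finset

section Bits

variable {n : ℕ}

theorem hamming_eq_zero_iff {u v : Fin n → Bool} : hamming u v = 0 ↔ u = v := by
  simp [hamming, funext_iff]

theorem hamming_eq_card_add_card (u v : Fin n → Bool) :
    hamming u v = (univ.filter (fun k => u k = false ∧ v k = true)).card
      + (univ.filter (fun k => u k = true ∧ v k = false)).card := by
  simp only [hamming, card_filter, ← sum_add_distrib]
  congr 1; ext k; cases u k <;> cases v k <;> rfl

theorem onesCount_add_card_filter (u v : Fin n → Bool) :
    onesCount u + (univ.filter (fun k => u k = false ∧ v k = true)).card
      = onesCount v + (univ.filter (fun k => u k = true ∧ v k = false)).card := by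
  simp only [onesCount, card_filter, ← sum_add_distrib]
  congr 1; ext k; cases u k <;> cases v k <;> rfl

theorem hamming_flip_two (u : Fin n → Bool) {p q : Fin n} (hpq : p ≠ q) :
    hamming (fun k => if k = p ∨ k = q then !u k else u k) u = 2 := by
  have : univ.filter (fun k => (if k = p ∨ k = q then !u k else u k) ≠ u k) = {p, q} := by
    ext k; by_cases hkp : k = p <;> by_cases hkq : k = q <;> simp_all
  rw [hamming, this, card_pair hpq]

theorem onesCount_flip_two (u : Fin n → Bool) {p q : Fin n} (hpq : p ≠ q)
    (hp : u p = true) (hq : u q = false) :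
    onesCount (fun k => if k = p ∨ k = q then !u k else u k) = onesCount u := by
  have : univ.filter (fun k => (if k = p ∨ k = q then !u k else u k) = true)
      = insert q ((univ.filter (u · = true)).erase p) := by
    ext k; by_cases hkp : k = p <;> by_cases hkq : k = q <;> simp_all
  rw [onesCount, this, card_insert_of_notMem (by simp [hq]), card_erase_of_mem (by simp [hp]),
    onesCount, Nat.sub_add_cancel (card_pos.2 ⟨p, by simp [hp]⟩)]

end Bits

theorem mul_sub_add_ite_eq_of_two_mul_eq {m c c' : ℕ} {a b : Bool} (hc : 2 * c = m)
    (hc' : c' ≤ m)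
    (h : c' + (if a then 1 else 0) = c + (if b then 1 else 0)) :
    c' * (m - c') + (if a ≠ b then 1 else 0) = c * (m - c) := by
  subst hc
  cases a <;> cases b <;> simp only [Bool.false_eq_true, if_true, if_false, ne_eq,
    not_true_eq_false, not_false_eq_true, reduceCtorEq] at h ⊢
  · rw [show c' = c by omega, add_zero]
  · obtain ⟨d, rfl, rfl⟩ : ∃ d, c = d + 1 ∧ c' = d + 2 := ⟨c - 1, by omega, by omega⟩
    rw [show 2 * (d + 1) - (d + 2) = d by omega, show 2 * (d + 1) - (d + 1) = d + 1 by omega]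
    ring
  · obtain rfl : c = c' + 1 := by omega
    rw [show 2 * (c' + 1) - c' = c' + 2 by omega, show 2 * (c' + 1) - (c' + 1) = c' + 1 by omega]
    ring
  · rw [show c' = c by omega, add_zero]

theorem card_filter_lt_ne_eq_mul {α : Type*} [LinearOrder α] [Fintype α] (f : α → Bool) :
    (univ.filter (fun p : α × α => p.1 < p.2 ∧ f p.1 ≠ f p.2)).card
      = (univ.filter (f · = true)).card * (univ.filter (f · = false)).card := by
  rw [← card_product]
  refine card_nbij' (fun p => if f p.1 then p else p.swap)
    (fun q => if q.1 < q.2 then q else q.swap) ?_ ?_ ?_ ?_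
  · rintro ⟨a, b⟩ h
    cases ha : f a <;> cases hb : f b <;> simp_all
  · rintro ⟨a, b⟩ h
    simp only [coe_product, Set.mem_prod, mem_coe, mem_filter, mem_univ, true_and] at h
    rcases lt_trichotomy a b with hab | rfl | hab <;> simp_all [not_lt_of_gt]
  · rintro ⟨a, b⟩ h
    cases ha : f a <;> simp_all [not_lt_of_gt]
  · rintro ⟨a, b⟩ h
    rcases lt_trichotomy a b with hab | rfl | hab <;> simp_all [not_lt_of_gt]

section Population

variable {m n : ℕ}

theorem totalHamming_eq_sum_colCount (P : Fin m → Fin n → Bool) :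
    totalHamming P = ∑ k, colCount P k * (m - colCount P k) := by
  have hzeros (k : Fin n) : (univ.filter (P · k = false)).card = m - colCount P k := by
    have := card_filter_add_card_filter_not (s := univ) (fun j => P j k = true)
    simp only [Bool.not_eq_true, card_univ, Fintype.card_fin] at this
    rw [colCount]
    omega
  simp only [totalHamming, hamming, card_filter (fun k => _ ≠ _)]
  rw [sum_comm]
  refine sum_congr rfl fun k _ => ?_
  rw [← card_filter, filter_filter, card_filter_lt_ne_eq_mul (P · k), hzeros, colCount]

theorem colCount_le (P : Fin m → Fin n → Bool) (k : Fin n) : colCount P k ≤ m :=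
  (card_filter_le _ _).trans_eq (card_fin m)

theorem colCount_update_add (P : Fin m → Fin n → Bool) (i : Fin m) (y : Fin n → Bool)
    (k : Fin n) :
    colCount (Function.update P i y) k + (if P i k then 1 else 0)
      = colCount P k + (if y k then 1 else 0) := by
  simp only [colCount, card_filter]
  rw [← sum_erase_add _ _ (mem_univ i), ← sum_erase_add _ _ (mem_univ i),
    sum_congr rfl fun j hj => by rw [Function.update_of_ne (ne_of_mem_erase hj)],
    Function.update_self]
  omega

theorem totalHamming_update_add_hamming_of_balanced (P : Fin m → Fin n → Bool)
    (hP : ∀ k, 2 * colCount P k = m) (i : Fin m) (y : Fin n → Bool) :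
    totalHamming (Function.update P i y) + hamming (P i) y = totalHamming P := by
  rw [totalHamming_eq_sum_colCount, totalHamming_eq_sum_colCount, hamming, card_filter,
    ← sum_add_distrib]
  exact sum_congr rfl fun k _ =>
    mul_sub_add_ite_eq_of_two_mul_eq (hP k) (colCount_le _ k) (colCount_update_add P i y k)

end Population

theorem stmt17 (n : ℕ) (hn : Odd n) (x : Fin (n + 1) → Fin n → Bool)
    (hlevels : ∀ j : Fin (n + 1), onesCount (x j) = j)
    (hot cold : Fin n) (hne : hot ≠ cold)
    (hhot : colCount x hot = (n + 3) / 2) (hcold : colCount x cold = (n - 1) / 2)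
    (hbal : ∀ k : Fin n, k ≠ hot → k ≠ cold → colCount x k = (n + 1) / 2)
    (i : Fin (n + 1)) (hic : x i cold = false) (hih : x i hot = true)
    (xt : Fin n → Bool)
    (hxt : xt = fun k => if k = hot ∨ k = cold then !(x i k) else x i k)
    (S0 S1 : Finset (Fin n))
    (hS0 : S0 = Finset.univ.filter (fun k => xt k = false))
    (hS1 : S1 = Finset.univ.filter (fun k => xt k = true))
    (y : Fin n → Bool) (hy : onesCount y = i) (hyt : y ≠ xt) :
    (totalHamming x ≤ totalHamming (Function.update x i y) ↔
        (S0.filter (fun k => y k = true)).card = 1 ∧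
          (S1.filter (fun k => y k = false)).card = 1) ∧
      ((S0.filter (fun k => y k = true)).card = 1 ∧
          (S1.filter (fun k => y k = false)).card = 1 →
        totalHamming (Function.update x i y) = totalHamming x) := by
  obtain ⟨t, rfl⟩ := hn
  subst hS0 hS1
  have hbalanced (k : Fin (2 * t + 1)) :
      2 * colCount (Function.update x i xt) k = 2 * t + 2 := by
    have h := colCount_update_add x i xt k
    rw [congrFun hxt k] at h
    by_cases hkh : k = hot
    · subst hkh
      simp only [hih, ↓reduceIte, true_or, Bool.not_true, Bool.false_eq_true, add_zero] at h
      omega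
    by_cases hkc : k = cold
    · subst hkc
      simp only [hic, Bool.false_eq_true, ↓reduceIte, add_zero, or_true, Bool.not_false] at h
      omega
    simp only [hkh, hkc, or_self, ↓reduceIte, Nat.add_right_cancel_iff] at h
    have := hbal k hkh hkc
    omega
  have hflip : hamming xt (x i) = 2 := hxt ▸ hamming_flip_two (x i) hne
  have hx := totalHamming_update_add_hamming_of_balanced _ hbalanced i (x i)
  have hy' := totalHamming_update_add_hamming_of_balanced _ hbalanced i y
  rw [Function.update_idem, Function.update_eq_self, Function.update_self, hflip] at hx
  rw [Function.update_idem, Function.update_self, hamming_eq_card_add_card] at hy'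
  have hones : onesCount xt = onesCount y := by
    rw [hxt, onesCount_flip_two _ hne hih hic, hy, hlevels]
  have hab := onesCount_add_card_filter xt y
  have hpos : hamming xt y ≠ 0 := mt hamming_eq_zero_iff.1 (Ne.symm hyt)
  rw [hamming_eq_card_add_card] at hpos
  simp only [filter_filter]
  omega
end

section
/- Let x_{i+1} be a bit string with i+1 ones and let V be the set of n - i bit strings each having i ones, obtained from a fixed string x_i (with i ones, one of them at a designated hot position h) by flipping the bit at h and one zero-bit of x_i. Then x_{i+1} has Hamming distance 1 to at most two elements of V, and Hamming distance at least 3 to every other element of V. -/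
/- Compare the strings through their sets of one-positions. If `z` has one more one than `v`,
then `hamming z v = 2 · #(ones v \ ones z) + 1`: the distance is odd, so it is `1` or at least
`3`, and it is `1` exactly when every one of `v` is a one of `z`. The elements of `V` all
share the ones of `x` other than `h` and differ by one extra position `k` with `x k = false`;
if `z` covers the ones of such an element for every `k` in a set `K`, then `ones z` contains
the `i - 1` ones of `x` off `h` together with `K`, so `#K ≤ 2`. -/

open Finset Function

section Ones

variable {n : ℕ}

def ones (x : Fin n → Bool) : Finset (Fin n) :=
  univ.filter (fun k => x k = true)

@[simp]
lemma mem_ones {x : Fin n → Bool} {k : Fin n} : k ∈ ones x ↔ x k = true := by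
  simp [ones]

lemma card_ones (x : Fin n → Bool) : #(ones x) = onesCount x := rfl

lemma hamming_eq_card_sdiff_add_card_sdiff (x y : Fin n → Bool) :
    hamming x y = #(ones x \ ones y) + #(ones y \ ones x) := by
  rw [hamming, ← card_union_of_disjoint disjoint_sdiff_sdiff]
  congr 1
  ext k
  cases hx : x k <;> cases hy : y k <;> simp [hx, hy]

lemma hamming_eq_two_mul_add_one {z v : Fin n → Bool}
    (hzv : onesCount z = onesCount v + 1) :
    hamming z v = 2 * #(ones v \ ones z) + 1 := by
  have hz := card_sdiff_add_card_inter (ones z) (ones v)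
  have hv := card_sdiff_add_card_inter (ones v) (ones z)
  rw [inter_comm] at hv
  rw [hamming_eq_card_sdiff_add_card_sdiff, ← card_ones, ← card_ones] at *
  omega

lemma hamming_eq_one_iff_ones_subset {z v : Fin n → Bool}
    (hzv : onesCount z = onesCount v + 1) :
    hamming z v = 1 ↔ ones v ⊆ ones z := by
  rw [hamming_eq_two_mul_add_one hzv, ← sdiff_eq_empty_iff_subset, ← card_eq_zero]
  omega

lemma three_le_hamming_of_ne_one {z v : Fin n → Bool}
    (hzv : onesCount z = onesCount v + 1) (hne : hamming z v ≠ 1) :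
    3 ≤ hamming z v := by
  rw [hamming_eq_two_mul_add_one hzv] at hne ⊢
  omega

lemma ones_update_update {x : Fin n → Bool} {h k : Fin n} (hk : x k = false) :
    ones (update (update x h false) k true) = insert k ((ones x).erase h) := by
  ext p
  rcases eq_or_ne p k with rfl | hpk
  · simp
  · rcases eq_or_ne p h with rfl | hph <;> simp [*]

lemma onesCount_update_update {x : Fin n → Bool} {h k : Fin n}
    (hh : x h = true) (hk : x k = false) :
    onesCount (update (update x h false) k true) = onesCount x := by
  have hh' : h ∈ ones x := mem_ones.2 hh
  rw [← card_ones, ← card_ones, ones_update_update hk,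
    card_insert_of_notMem (by simp [hk]), card_erase_add_one hh']

lemma card_filter_ones_update_update_subset_le_two {x z : Fin n → Bool} {h : Fin n}
    (hh : x h = true) (hz : onesCount z = onesCount x + 1) :
    #(univ.filter fun k => x k = false ∧
        ones (update (update x h false) k true) ⊆ ones z) ≤ 2 := by
  set K := univ.filter fun k => x k = false ∧ ones (update (update x h false) k true) ⊆ ones z
  obtain hK | ⟨k₀, hk₀⟩ := K.eq_empty_or_nonempty
  · simp [hK]
  have hsub : K ∪ (ones x).erase h ⊆ ones z := by
    refine union_subset (fun k hk => ?_) ?_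
    · obtain ⟨hxk, hk⟩ := (mem_filter.1 hk).2
      exact hk (by simp [ones_update_update hxk])
    · obtain ⟨hxk₀, hk₀⟩ := (mem_filter.1 hk₀).2
      rw [ones_update_update hxk₀] at hk₀
      exact (subset_insert _ _).trans hk₀
  have hdisj : Disjoint K ((ones x).erase h) := by
    refine disjoint_left.2 fun k hk hk' => ?_
    simp_all [K]
  have := card_le_card hsub
  rw [card_union_of_disjoint hdisj, card_erase_of_mem (mem_ones.2 hh), card_ones,
    card_ones] at this
  have : 0 < onesCount x := card_pos.2 ⟨h, mem_ones.2 hh⟩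
  omega

end Ones

theorem stmt19 (n i : ℕ) (x : Fin n → Bool) (h : Fin n)
    (hx : x h = true) (hones : onesCount x = i)
    (V : Set (Fin n → Bool))
    (hV : V = {v | ∃ k, x k = false ∧ v = Function.update (Function.update x h false) k true})
    (z : Fin n → Bool) (hz : onesCount z = i + 1) :
    Set.ncard {v ∈ V | hamming z v = 1} ≤ 2 ∧
      ∀ v ∈ V, hamming z v ≠ 1 → 3 ≤ hamming z v := by
  subst hV hones
  have hzv : ∀ k, x k = false → onesCount z = onesCount (update (update x h false) k true) + 1 :=
    fun k hk => by rw [onesCount_update_update hx hk, hz]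
  refine ⟨?_, ?_⟩
  · set K := univ.filter fun k => x k = false ∧ ones (update (update x h false) k true) ⊆ ones z
    have hcover : {v ∈ {v | ∃ k, x k = false ∧ v = update (update x h false) k true} |
        hamming z v = 1} ⊆ K.image fun k => update (update x h false) k true := by
      rintro _ ⟨⟨k, hk, rfl⟩, h1⟩
      rw [hamming_eq_one_iff_ones_subset (hzv k hk)] at h1
      exact mem_coe.2 (mem_image_of_mem _ (by simp [K, hk, h1]))
    calc _ ≤ (K.image fun k => update (update x h false) k true : Set _).ncard :=
          Set.ncard_le_ncard hcover (Set.toFinite _)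
      _ ≤ #K := by rw [Set.ncard_coe_finset]; exact card_image_le
      _ ≤ 2 := card_filter_ones_update_update_subset_le_two hx hz
  · rintro _ ⟨k, hk, rfl⟩
    exact three_le_hamming_of_ne_one (hzv k hk)
end
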